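/- arXiv:1903.01465 — 3 statements merged into one kernel-verified Lean document; each statement's English description precedes it below -/
import Mathlib

section
/- The bit vector Z_h satisfying the H&M invariant can be partitioned into consecutive blocks such that each block consists exactly of the positions whose corresponding suffixes (of t0 or t1) share the same length-h prefix; within each block all bits coming from t0 precede all bits coming from t1, and the common length-h prefix of any block is lexicographically smaller than that of any later block. -/
open List Finset

variable {A : Type*}

/-- Length of the longest common prefix of two lists. -/
def lcpLen [DecidableEq A] : List A → List A → ℕ
  | a :: as, b :: bs => if a = b then lcpLen as bs + 1 else 0
  | _, _ => 0

/-- `sa` is the suffix array of `t`: a bijection of `[0, |t|)` listing the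
suffixes of `t` in increasing lexicographic order. -/
def isSuffixArray [LinearOrder A] (t : List A) (sa : ℕ → ℕ) : Prop :=
  Set.BijOn sa (Set.Iio t.length) (Set.Iio t.length) ∧
    ∀ i j, i < j → j < t.length → t.drop (sa i) < t.drop (sa j)

/-- The BWT of `t` w.r.t. the suffix array `sa` (0-based):
`bwt[i] = t[n-1]` if `sa[i] = 0` and `bwt[i] = t[sa[i]-1]` otherwise. -/
def bwtOf [Inhabited A] (t : List A) (sa : ℕ → ℕ) (i : ℕ) : A :=
  if sa i = 0 then t.getD (t.length - 1) default else t.getD (sa i - 1) default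

/-- The BWT of `t` as a list. -/
def bwtList [LinearOrder A] [Inhabited A] (t : List A) (sa : ℕ → ℕ) : List A :=
  List.ofFn (fun i : Fin t.length => bwtOf t sa i)

/-- `t0` and `t1` end with distinct sentinels `$0 < $1` that are smaller than
all other symbols and occur nowhere else in `t0 ++ t1`. -/
def Sentinels [LinearOrder A] [Inhabited A] (t0 t1 : List A) : Prop :=
  t0 ≠ [] ∧ t1 ≠ [] ∧ t0.getLast! < t1.getLast! ∧
  (∀ c ∈ t0 ++ t1, c ≠ t0.getLast! → t0.getLast! < c) ∧
  (∀ c ∈ t0 ++ t1, c ≠ t0.getLast! → c ≠ t1.getLast! → t1.getLast! < c) ∧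
  (t0 ++ t1).count t0.getLast! = 1 ∧ (t0 ++ t1).count t1.getLast! = 1

/-- The multi-string BWT of `t0, t1` w.r.t. a suffix array `sa` of `t0 ++ t1`
(0-based): `bwt01[i] = $0` if `sa[i] = 0`, `bwt01[i] = $1` if `sa[i] = n0`,
and `bwt01[i] = (t0 t1)[sa[i]-1]` otherwise. -/
def mbwt [Inhabited A] (t0 t1 : List A) (sa : ℕ → ℕ) (i : ℕ) : A :=
  if sa i = 0 then t0.getLast!
  else if sa i = t0.length then t1.getLast!
  else (t0 ++ t1).getD (sa i - 1) default

/-- Position (index in `Z`) of the `i`-th (0-based) occurrence of bit `b`. -/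
def nthBitPos (Z : List Bool) (b : Bool) (i : ℕ) : ℕ :=
  ((List.range Z.length).filter (fun k => Z.getD k (!b) == b)).getD i Z.length

/-- The length-`h` prefix of the context (suffix of `t0` or `t1`) associated to
position `p` of the bit vector `Z`: position `p` holds the `r`-th `0`
(resp. `r`-th `1`) where `r` is the number of `0`s (resp. `1`s) before `p`. -/
def keyAt [LinearOrder A] (t0 t1 : List A) (sa0 sa1 : ℕ → ℕ) (h : ℕ)
    (Z : List Bool) (p : ℕ) : List A :=
  if Z.getD p false then (t1.drop (sa1 ((Z.take p).count true))).take h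
  else (t0.drop (sa0 ((Z.take p).count false))).take h

/-- The LCP array of `t` w.r.t. `sa` (0-based), with `-1` at the two ends. -/
def lcpArr [DecidableEq A] (t : List A) (sa : ℕ → ℕ) (i : ℕ) : ℤ :=
  if i = 0 ∨ t.length ≤ i then -1
  else (lcpLen (t.drop (sa (i - 1))) (t.drop (sa i)) : ℤ)

/-- One pass of the H&M algorithm: every bit `b` of `Z` is tagged with the next
symbol `c` of `bwt_b`, and the tagged bits are stably sorted by symbol. -/
def hmStep [LinearOrder A] [Inhabited A] (bwt0 bwt1 : List A) (Z : List Bool) :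
    List Bool :=
  let pairs := (List.range Z.length).map (fun k =>
    let b := Z.getD k false
    let c := if b then bwt1.getD ((Z.take k).count true) default
             else bwt0.getD ((Z.take k).count false) default
    (b, c))
  (pairs.mergeSort (fun p q => decide (p.2 ≤ q.2))).map Prod.fst

/-- The bit vector `Z_h` of the H&M algorithm: `Z_0 = 0^{n0} 1^{n1}` and
`Z_h = hmStep Z_{h-1}`. -/
def hmZ [LinearOrder A] [Inhabited A] (bwt0 bwt1 : List A) (n0 n1 : ℕ) :
    ℕ → List Bool
  | 0 => List.replicate n0 false ++ List.replicate n1 true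
  | h + 1 => hmStep bwt0 bwt1 (hmZ bwt0 bwt1 n0 n1 h)

/-- Id of the block of `Z` containing position `k`: the largest `j ≤ k` with
`B[j] ≠ 0`. -/
def blockIdAt (B : List ℕ) (k : ℕ) : ℕ :=
  ((List.range (k + 1)).filter (fun j => !(B.getD j 0 == 0))).foldr max 0

/-- One pass of the modified H&M algorithm also maintaining the marker array
`B`: bits tagged with their symbol and the id of their block are stably sorted
by symbol; a zero entry `B[j]` receives the value `h` iff a new block of `Z_h`
(a change of the pair (symbol, source-block id)) starts at `j`. -/
def gstep [LinearOrder A] [Inhabited A] (bwt0 bwt1 : List A) (h : ℕ)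
    (ZB : List Bool × List ℕ) : List Bool × List ℕ :=
  let Z := ZB.1
  let B := ZB.2
  let pairs := (List.range Z.length).map (fun k =>
    let b := Z.getD k false
    let c := if b then bwt1.getD ((Z.take k).count true) default
             else bwt0.getD ((Z.take k).count false) default
    (b, c, blockIdAt B k))
  let sorted := pairs.mergeSort (fun p q => decide (p.2.1 ≤ q.2.1))
  let Z' := sorted.map (·.1)
  let B' := (List.range B.length).map (fun j =>
    if B.getD j 0 ≠ 0 then B.getD j 0
    else if j < sorted.length ∧
        (j = 0 ∨ (sorted.getD (j - 1) default).2 ≠ (sorted.getD j default).2)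
      then h else 0)
  (Z', B')

/-- State `(Z_h, B)` of the modified H&M / Gap algorithm after iteration `h`:
`Z_0 = 0^{n0} 1^{n1}`, `B` initialized to `1 0^{n0+n1-1} 1`. -/
def gapState [LinearOrder A] [Inhabited A] (bwt0 bwt1 : List A) (n0 n1 : ℕ) :
    ℕ → List Bool × List ℕ
  | 0 => (List.replicate n0 false ++ List.replicate n1 true,
          1 :: (List.replicate (n0 + n1 - 1) 0 ++ [1]))
  | h + 1 => gstep bwt0 bwt1 (h + 1) (gapState bwt0 bwt1 n0 n1 h)

/-- `[ℓ,m]` is a logical `h`-block: a maximal run of suffix-array positions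
whose suffixes share the same length-`h` prefix. -/
def isBlock [LinearOrder A] (t : List A) (sa : ℕ → ℕ) (h : ℕ) (ℓ m : ℕ) : Prop :=
  ℓ ≤ m ∧ m < t.length ∧ lcpArr t sa ℓ < h ∧ lcpArr t sa (m + 1) < h ∧
    ∀ i, ℓ < i → i ≤ m → (h : ℤ) ≤ lcpArr t sa i


/-! Position `p` of `Z` carrying bit `b` is the `r`-th occurrence of `b`, with `r` the number of
`b`s before `p`, so `nthBitPos Z b r = p` and the H&M invariant can be read on positions: a `0` at
`p` and a `1` at `q` satisfy `key p ≤ key q ↔ p < q`. For two equal bits the ranks increase with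
the position and the suffix array orders the suffixes, hence their length-`h` prefixes. So keys
are nondecreasing along `Z`, and a `1` followed by a `0` has a strictly smaller key, which is why
inside a run of equal keys the `0`s come first. -/

theorem List.take_le_take_of_le [LinearOrder A] {s t : List A} (hst : s ≤ t) (n : ℕ) :
    s.take n ≤ t.take n := by
  obtain rfl | hlt := hst.eq_or_lt
  · exact le_rfl
  clear hst
  induction hlt generalizing n with
  | nil =>
    cases n with
    | zero => simp
    | succ n => exact le_of_lt List.Lex.nil
  | cons _ ih =>
    cases n with
    | zero => simp
    | succ n => simpa using List.cons_le_cons _ (ih n)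
  | rel hab =>
    cases n with
    | zero => simp
    | succ n => exact le_of_lt (List.Lex.rel hab)

theorem List.count_take_lt_count_take [BEq A] [LawfulBEq A] {l : List A} {a : A} {p q : ℕ}
    (hp : p < l.length) (ha : l[p] = a) (hpq : p < q) :
    (l.take p).count a < (l.take q).count a := by
  subst ha
  have hsucc : (l.take (p + 1)).count l[p] = (l.take p).count l[p] + 1 := by
    rw [List.take_add_one, List.getElem?_eq_getElem hp, List.count_append]
    simp
  have hprefix : (l.take (p + 1)).count l[p] ≤ (l.take q).count l[p] :=
    ((List.take_isPrefix_take.mpr (Or.inl hpq)).sublist).count_le _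
  omega

theorem List.count_take_lt_count [BEq A] [LawfulBEq A] {l : List A} {a : A} {p : ℕ}
    (hp : p < l.length) (ha : l[p] = a) : (l.take p).count a < l.count a := by
  simpa using List.count_take_lt_count_take hp ha hp

theorem List.length_filter_range_eq_count_take (Z : List Bool) (b : Bool) {p : ℕ}
    (hp : p ≤ Z.length) :
    ((List.range p).filter (fun k => Z.getD k (!b) == b)).length = (Z.take p).count b := by
  induction p with
  | zero => simp
  | succ p ih =>
    have hp' : p < Z.length := hp
    rw [List.range_succ, List.filter_append, List.length_append, ih hp'.le, List.take_add_one,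
      List.count_append, List.getElem?_eq_getElem hp', List.filter_singleton,
      List.getD_eq_getElem _ _ hp']
    by_cases hb : Z[p] = b <;> simp [hb, Bool.beq_eq_decide_eq]

theorem nthBitPos_count_take {Z : List Bool} {b : Bool} {p : ℕ} (hp : p < Z.length)
    (hb : Z[p] = b) : nthBitPos Z b ((Z.take p).count b) = p := by
  obtain ⟨m, hm⟩ : ∃ m, Z.length = p + 1 + m := ⟨Z.length - (p + 1), by omega⟩
  have hpb : Z.getD p (!b) = b := (List.getD_eq_getElem _ _ hp).trans hb
  rw [nthBitPos, hm, List.range_add, List.range_succ, List.filter_append, List.filter_append,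
    ← List.length_filter_range_eq_count_take Z b hp.le, List.append_assoc,
    List.getD_append_right _ _ _ _ le_rfl, Nat.sub_self, List.filter_singleton, hpb]
  simp

theorem isSuffixArray.take_drop_le [LinearOrder A] {t : List A} {sa : ℕ → ℕ}
    (hsa : isSuffixArray t sa) {i j : ℕ} (hij : i ≤ j) (hj : j < t.length) (h : ℕ) :
    (t.drop (sa i)).take h ≤ (t.drop (sa j)).take h := by
  obtain rfl | hij := hij.eq_or_lt
  · exact le_rfl
  · exact List.take_le_take_of_le (hsa.2 i j hij hj).le h

def HMInvariant [LinearOrder A] (t0 t1 : List A) (sa0 sa1 : ℕ → ℕ) (h : ℕ) (Z : List Bool) :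
    Prop :=
  ∀ i, i < t0.length → ∀ j, j < t1.length →
    (nthBitPos Z false i < nthBitPos Z true j ↔
      (t0.drop (sa0 i)).take h ≤ (t1.drop (sa1 j)).take h)

section KeyOrder

variable [LinearOrder A] {t0 t1 : List A} {sa0 sa1 : ℕ → ℕ} {h : ℕ} {Z : List Bool} {p q : ℕ}

theorem keyAt_of_getElem_false (hp : p < Z.length) (hb : Z[p] = false) :
    keyAt t0 t1 sa0 sa1 h Z p = (t0.drop (sa0 ((Z.take p).count false))).take h := by
  rw [keyAt, List.getD_eq_getElem _ _ hp, hb]; rfl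

theorem keyAt_of_getElem_true (hp : p < Z.length) (hb : Z[p] = true) :
    keyAt t0 t1 sa0 sa1 h Z p = (t1.drop (sa1 ((Z.take p).count true))).take h := by
  rw [keyAt, List.getD_eq_getElem _ _ hp, hb]; rfl

theorem keyAt_le_keyAt_iff_lt
    (hc0 : Z.count false = t0.length) (hc1 : Z.count true = t1.length)
    (hinv : HMInvariant t0 t1 sa0 sa1 h Z)
    (hp : p < Z.length) (hq : q < Z.length) (hbp : Z[p] = false) (hbq : Z[q] = true) :
    keyAt t0 t1 sa0 sa1 h Z p ≤ keyAt t0 t1 sa0 sa1 h Z q ↔ p < q := by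
  rw [keyAt_of_getElem_false hp hbp, keyAt_of_getElem_true hq hbq,
    ← hinv _ (hc0 ▸ List.count_take_lt_count hp hbp) _ (hc1 ▸ List.count_take_lt_count hq hbq),
    nthBitPos_count_take hp hbp, nthBitPos_count_take hq hbq]

theorem keyAt_lt_keyAt_of_true_of_false
    (hc0 : Z.count false = t0.length) (hc1 : Z.count true = t1.length)
    (hinv : HMInvariant t0 t1 sa0 sa1 h Z)
    (hpq : p < q) (hq : q < Z.length) (hbp : Z[p] = true) (hbq : Z[q] = false) :
    keyAt t0 t1 sa0 sa1 h Z p < keyAt t0 t1 sa0 sa1 h Z q :=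
  lt_of_not_ge fun hle =>
    hpq.not_gt ((keyAt_le_keyAt_iff_lt hc0 hc1 hinv hq (hpq.trans hq) hbq hbp).1 hle)

theorem keyAt_le_keyAt (hsa0 : isSuffixArray t0 sa0) (hsa1 : isSuffixArray t1 sa1)
    (hc0 : Z.count false = t0.length) (hc1 : Z.count true = t1.length)
    (hinv : HMInvariant t0 t1 sa0 sa1 h Z) (hpq : p < q) (hq : q < Z.length) :
    keyAt t0 t1 sa0 sa1 h Z p ≤ keyAt t0 t1 sa0 sa1 h Z q := by
  have hp := hpq.trans hq
  cases hbp : Z[p] <;> cases hbq : Z[q]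
  · rw [keyAt_of_getElem_false hp hbp, keyAt_of_getElem_false hq hbq]
    exact hsa0.take_drop_le (List.count_take_lt_count_take hp hbp hpq).le
      (hc0 ▸ List.count_take_lt_count hq hbq) h
  · exact (keyAt_le_keyAt_iff_lt hc0 hc1 hinv hp hq hbp hbq).2 hpq
  · exact (keyAt_lt_keyAt_of_true_of_false hc0 hc1 hinv hpq hq hbp hbq).le
  · rw [keyAt_of_getElem_true hp hbp, keyAt_of_getElem_true hq hbq]
    exact hsa1.take_drop_le (List.count_take_lt_count_take hp hbp hpq).le
      (hc1 ▸ List.count_take_lt_count hq hbq) h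

end KeyOrder

theorem hm_block_structure_general [LinearOrder A]
    (t0 t1 : List A) (sa0 sa1 : ℕ → ℕ) (h : ℕ) (Z : List Bool)
    (hsa0 : isSuffixArray t0 sa0) (hsa1 : isSuffixArray t1 sa1)
    (hc0 : Z.count false = t0.length) (hc1 : Z.count true = t1.length)
    (hinv : ∀ i, i < t0.length → ∀ j, j < t1.length →
      (nthBitPos Z false i < nthBitPos Z true j ↔
        (t0.drop (sa0 i)).take h ≤ (t1.drop (sa1 j)).take h)) :
    (∀ p q, p < q → q < Z.length →
      keyAt t0 t1 sa0 sa1 h Z p ≤ keyAt t0 t1 sa0 sa1 h Z q) ∧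
    (∀ p q, p < q → q < Z.length →
      keyAt t0 t1 sa0 sa1 h Z p = keyAt t0 t1 sa0 sa1 h Z q →
      Z.getD p false = true → Z.getD q false = true) := by
  refine ⟨fun p q hpq hq => keyAt_le_keyAt hsa0 hsa1 hc0 hc1 hinv hpq hq,
    fun p q hpq hq hkey hbp => ?_⟩
  have hp := hpq.trans hq
  rw [List.getD_eq_getElem _ _ hp] at hbp
  rw [List.getD_eq_getElem _ _ hq, ← Bool.not_eq_false]
  exact fun hbq => (keyAt_lt_keyAt_of_true_of_false hc0 hc1 hinv hpq hq hbp hbq).ne hkey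

/-- a bit vector satisfying the H&M invariant is partitioned into
blocks of equal length-`h` keys: keys are nondecreasing along `Z` (so the
positions sharing a key form consecutive blocks, with the key of any block
smaller than that of later blocks), and within equal keys all bits from `t0`
precede all bits from `t1`. -/
theorem hm_block_structure [LinearOrder A] [Inhabited A]
    (t0 t1 : List A) (sa0 sa1 : ℕ → ℕ) (h : ℕ) (Z : List Bool)
    (hsent : Sentinels t0 t1)
    (hsa0 : isSuffixArray t0 sa0) (hsa1 : isSuffixArray t1 sa1)
    (hlen : Z.length = t0.length + t1.length)
    (hc0 : Z.count false = t0.length) (hc1 : Z.count true = t1.length)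
    (hinv : ∀ i, i < t0.length → ∀ j, j < t1.length →
      (nthBitPos Z false i < nthBitPos Z true j ↔
        (t0.drop (sa0 i)).take h ≤ (t1.drop (sa1 j)).take h)) :
    (∀ p q, p < q → q < Z.length →
      keyAt t0 t1 sa0 sa1 h Z p ≤ keyAt t0 t1 sa0 sa1 h Z q) ∧
    (∀ p q, p < q → q < Z.length →
      keyAt t0 t1 sa0 sa1 h Z p = keyAt t0 t1 sa0 sa1 h Z q →
      Z.getD p false = true → Z.getD q false = true) :=
  hm_block_structure_general t0 t1 sa0 sa1 h Z hsa0 hsa1 hc0 hc1 hinv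
end

section
/- In the modified H&M algorithm maintaining the marker array B, for every h ≥ 0 and every maximal interval [ℓ,m] such that lcp01[ℓ] < h, min(lcp01[ℓ+1],…,lcp01[m]) ≥ h, and lcp01[m+1] < h, at the end of iteration h the array B satisfies B[ℓ] ≠ 0, B[ℓ+1] = ⋯ = B[m] = 0, and B[m+1] ≠ 0, and Z_h[ℓ,m] is one of the logical blocks of Z_h. -/
open List Finset

variable {A : Type*}

/-!
Invariant after iteration `h`: entry `p` of `Z_h` stands for a suffix whose length-`h` prefix,
cut after its sentinel, equals that of the `p`-th suffix in `sa01`, and `B[j] ≠ 0` exactly when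
`lcp01[j] < h`. Since each sentinel occurs once, a suffix of `t0` or `t1` is never a prefix of
another suffix of `t0 ++ t1`; hence these suffixes compare, and have the same lcp values, as the
corresponding suffixes of `t0 ++ t1`.

One iteration prepends to every key the BWT symbol of its suffix. Sorting stably by that symbol
orders entries with equal symbols by the block of their old key, hence by their new key: the
sorted tags list the `(h + 1)`-keys in `sa01` order, because two sorted permutations of each other
coincide. Restricted to the entries of one string they list its suffixes in `sa0` or `sa1` order,
which gives the statement about `Z_{h+1}`. A new block starts between two adjacent tags exactly
when their symbols or old blocks differ, i.e. when the `(h + 1)`-keys differ, i.e. when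
`lcp01 < h + 1`.
-/

section Lcp

variable {α : Type*} [DecidableEq α]

@[simp] lemma lcpLen_nil_left (v : List α) : lcpLen [] v = 0 := by cases v <;> rfl

@[simp] lemma lcpLen_nil_right (u : List α) : lcpLen u [] = 0 := by cases u <;> rfl

@[simp] lemma lcpLen_cons_cons (a b : α) (u v : List α) :
    lcpLen (a :: u) (b :: v) = if a = b then lcpLen u v + 1 else 0 := rfl

lemma lcpLen_comm : ∀ u v : List α, lcpLen u v = lcpLen v u
  | [], _ | _ :: _, [] => by simp
  | a :: u, b :: v => by
    by_cases hab : a = b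
    · subst hab; simp [lcpLen_comm u v]
    · simp [hab, Ne.symm hab]

lemma lcpLen_le_length_left :
    ∀ u v : List α, lcpLen u v ≤ u.length
  | [], _ | _ :: _, [] => by simp
  | a :: u, b :: v => by
    by_cases hab : a = b
    · simpa [hab] using lcpLen_le_length_left u v
    · simp [hab]

lemma take_eq_take_iff_le_lcpLen :
    ∀ {n : ℕ} {u v : List α}, lcpLen u v < u.length →
      (u.take n = v.take n ↔ n ≤ lcpLen u v)
  | 0, _, _, _ => by simp
  | _ + 1, [], _, hu => by simp at hu
  | _ + 1, _ :: _, [], _ => by simp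
  | n + 1, a :: u, b :: v, hu => by
    by_cases hab : a = b
    · subst hab
      simp only [lcpLen_cons_cons, if_true, List.length_cons] at hu ⊢
      simp [take_eq_take_iff_le_lcpLen (n := n) (by omega : lcpLen u v < u.length)]
    · simp [hab]

lemma getD_eq_getD_of_lt_lcpLen (d : α) :
    ∀ {k : ℕ} {u v : List α}, k < lcpLen u v → u.getD k d = v.getD k d
  | _, [], _, h | _, _ :: _, [], h => by simp at h
  | k, a :: u, b :: v, h => by
    by_cases hab : a = b
    · subst hab
      cases k with
      | zero => rfl
      | succ k =>
        simp only [lcpLen_cons_cons, if_true] at h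
        simpa using getD_eq_getD_of_lt_lcpLen d (k := k) (by omega)
    · simp [hab] at h

lemma lcpLen_take_take :
    ∀ (a b : ℕ) (u v : List α), lcpLen (u.take a) (v.take b) = min a (min b (lcpLen u v))
  | 0, _, _, _ | _ + 1, 0, _, _ | _ + 1, _ + 1, [], _ | _ + 1, _ + 1, _ :: _, [] => by simp
  | a + 1, b + 1, x :: u, y :: v => by
    by_cases hxy : x = y
    · subst hxy
      simp only [List.take_succ_cons, lcpLen_cons_cons, if_true, lcpLen_take_take a b u v]
      omega
    · simp [hxy]

end Lcp

namespace List

section LinearOrder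

variable {α : Type*} [LinearOrder α]

lemma cons_le_cons_of_le (a : α) {u v : List α} (h : u ≤ v) : a :: u ≤ a :: v := by
  rcases h.lt_or_eq with hlt | rfl
  · exact (List.cons_lt_cons_iff.mpr (Or.inr ⟨rfl, hlt⟩)).le
  · exact le_rfl

lemma take_le_take_of_lt : ∀ (n : ℕ) {u v : List α}, u < v → u.take n ≤ v.take n
  | 0, _, _, _ => le_rfl
  | _ + 1, [], _, _ => not_lt.mp (List.not_lt_nil _)
  | _ + 1, _ :: _, [], h => absurd h (List.not_lt_nil _)
  | n + 1, a :: u, b :: v, h => by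
    rcases List.cons_lt_cons_iff.mp h with hab | ⟨rfl, huv⟩
    · exact (List.cons_lt_cons_iff.mpr (Or.inl hab)).le
    · exact List.cons_le_cons_of_le a (take_le_take_of_lt n huv)

end LinearOrder

variable {α : Type*}

lemma getLast!_eq_getD [Inhabited α] {l : List α} (h : l ≠ []) :
    l.getLast! = l.getD (l.length - 1) default := by
  have hl : 0 < l.length := List.length_pos_iff.mpr h
  rw [List.getD_eq_getElem _ _ (by omega), List.getLast!_eq_getElem!,
    getElem!_pos l _ (by omega)]

lemma eq_of_getElem_eq_of_count_eq_one [DecidableEq α] {l : List α} {a : α}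
    (hc : l.count a = 1) {i j : ℕ} (hi : i < l.length) (hj : j < l.length)
    (hia : l[i] = a) (hja : l[j] = a) : i = j := by
  wlog hij : i < j generalizing i j
  · rcases Nat.lt_or_ge j i with hji | hji
    · exact (this hj hi hja hia hji).symm
    · omega
  have hmem_take : a ∈ l.take j := List.mem_iff_getElem.mpr ⟨i, by simp; omega, by simp [hia]⟩
  have hmem_drop : a ∈ l.drop j := List.mem_iff_getElem.mpr ⟨0, by simp; omega, by simp [hja]⟩
  have hsplit := List.count_append (a := a) (l₁ := l.take j) (l₂ := l.drop j)
  rw [List.take_append_drop] at hsplit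
  have := List.count_pos_iff.mpr hmem_take
  have := List.count_pos_iff.mpr hmem_drop
  omega

lemma count_take_lt_count_take_s4 [DecidableEq α] {l : List α} {p q : ℕ}
    (hp : p < l.length) (hpq : p < q) : (l.take p).count l[p] < (l.take q).count l[p] := by
  have hsucc : (l.take (p + 1)).count l[p] = (l.take p).count l[p] + 1 := by
    rw [List.take_add_one, List.getElem?_eq_getElem hp, List.count_append]
    simp
  have := ((List.take_sublist_take_left (l := l) (show p + 1 ≤ q by omega))).count_le l[p]
  omega

lemma map_getD_range (l : List α) (d : α) :
    (List.range l.length).map (fun k => l.getD k d) = l :=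
  List.ext_getElem (by simp) fun i _ hi => by simp [List.getElem?_eq_getElem hi]

lemma length_filter_range_getD [BEq α] (l : List α) (d a : α) :
    ((List.range l.length).filter fun k => l.getD k d == a).length = l.count a := by
  conv_rhs => rw [← List.map_getD_range l d]
  rw [List.count_eq_countP, List.countP_map, List.countP_eq_length_filter]
  rfl

lemma getElem_filter_countP_take (P : α → Bool) :
    ∀ {l : List α} {p : ℕ} (hp : p < l.length), P l[p] →
      ∃ hr : (l.take p).countP P < (l.filter P).length, (l.filter P)[(l.take p).countP P] = l[p]
  | a :: l, 0, _, hP => by simp_all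
  | a :: l, p + 1, hp, hP => by
    obtain ⟨hr, hget⟩ := List.getElem_filter_countP_take P (l := l) (p := p) (by simpa using hp)
      (by simpa using hP)
    by_cases ha : P a <;> simp_all

lemma perm_range'_of_nodup {l : List ℕ} {a k : ℕ} (hl : l.Nodup)
    (hmem : ∀ x ∈ l, a ≤ x ∧ x < a + k) (hlen : l.length = k) : l.Perm (List.range' a k) :=
  (List.subperm_of_subset hl fun x hx => List.mem_range'_1.mpr (hmem x hx)).perm_of_length_le
    (by simp [hlen])

section StableSort

variable {β : Type*} [LinearOrder β] (f : α → β)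

lemma filter_mergeSort_eq (l : List α) (v : β) :
    (l.mergeSort fun a b => decide (f a ≤ f b)).filter (fun a => f a == v) =
      l.filter (fun a => f a == v) := by
  have hv : ∀ a ∈ l.filter (fun a => f a == v), f a = v := fun a ha => by
    simpa using (List.mem_filter.mp ha).2
  have hsub : l.filter (fun a => f a == v) <+ l.mergeSort fun a b => decide (f a ≤ f b) :=
    List.sublist_mergeSort
      (fun _ _ _ hab hbc => by simp only [decide_eq_true_eq] at *; exact hab.trans hbc)
      (fun a b => by simpa using le_total (f a) (f b))
      (List.pairwise_of_forall_mem_list fun a ha b hb => by simp [hv a ha, hv b hb])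
      List.filter_sublist
  have hsub' := hsub.filter (fun a => f a == v)
  rw [List.filter_filter, List.filter_congr (fun a _ => Bool.and_self (f a == v))] at hsub'
  exact (hsub'.eq_of_length ((List.mergeSort_perm _ _).filter _).length_eq.symm).symm

/-- Stability of `mergeSort`: entries with equal sort keys keep their relative order. -/
lemma pairwise_mergeSort_of_pairwise {R : α → α → Prop} {l : List α} (hl : l.Pairwise R) :
    (l.mergeSort fun a b => decide (f a ≤ f b)).Pairwise
      (fun a b => f a < f b ∨ f a = f b ∧ R a b) := by
  have hsorted : (l.mergeSort fun a b => decide (f a ≤ f b)).Pairwise (fun a b => f a ≤ f b) :=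
    (List.pairwise_mergeSort
      (fun _ _ _ hab hbc => by simp only [decide_eq_true_eq] at *; exact hab.trans hbc)
      (fun a b => by simpa using le_total (f a) (f b)) l).imp (by simp)
  refine List.pairwise_iff_forall_sublist.mpr fun {a b} hab => ?_
  rcases (List.pairwise_iff_forall_sublist.mp hsorted hab).lt_or_eq with hlt | heq
  · exact Or.inl hlt
  · refine Or.inr ⟨heq, List.pairwise_iff_forall_sublist.mp hl ?_⟩
    have := hab.filter (fun x => f x == f a)
    rw [List.filter_mergeSort_eq] at this
    simp only [List.filter_cons, heq, beq_self_eq_true, if_true, List.filter_nil] at this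
    exact this.trans List.filter_sublist

end StableSort

end List

section LcpLex

variable {α : Type*} [LinearOrder α]

lemma take_lt_take_iff_of_lcpLen_lt : ∀ {a b : ℕ} {u v : List α},
    lcpLen u v < a → lcpLen u v < b → (u.take a < v.take b ↔ u < v)
  | 0, _, _, _, h, _ | _ + 1, 0, _, _, _, h => by simp at h
  | _ + 1, _ + 1, [], [], _, _ => by simp
  | _ + 1, _ + 1, [], _ :: _, _, _ => by simp
  | _ + 1, _ + 1, _ :: _, [], _, _ => by simp
  | a + 1, b + 1, x :: u, y :: v, ha, hb => by
    by_cases hxy : x = y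
    · subst hxy
      simp only [lcpLen_cons_cons, if_true] at ha hb
      simpa using take_lt_take_iff_of_lcpLen_lt (a := a) (b := b) (by omega) (by omega)
    · simp [List.cons_lt_cons_iff, hxy]

end LcpLex

section BlockId

variable {B : List ℕ} {j k : ℕ}

lemma blockIdAt_le : blockIdAt B k ≤ k :=
  List.max_le_of_forall_le _ _ fun x hx => by
    have := List.mem_range.mp (List.mem_filter.mp hx).1
    omega

lemma le_blockIdAt (hjk : j ≤ k) (hj : B.getD j 0 ≠ 0) : j ≤ blockIdAt B k :=
  List.le_max_of_le' 0 (List.mem_filter.mpr ⟨List.mem_range.mpr (by omega), by simpa using hj⟩)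
    le_rfl

lemma getD_blockIdAt_ne_zero (h0 : B.getD 0 0 ≠ 0) : B.getD (blockIdAt B k) 0 ≠ 0 := by
  set l := (List.range (k + 1)).filter (fun j => !(B.getD j 0 == 0))
  have h0l : 0 ∈ l := List.mem_filter.mpr ⟨by simp, by simpa using h0⟩
  have hmem : blockIdAt B k ∈ l :=
    List.maximum_mem (List.foldr_max_of_ne_nil (List.ne_nil_of_mem h0l)).symm
  simpa using (List.mem_filter.mp hmem).2

lemma blockIdAt_mono (h0 : B.getD 0 0 ≠ 0) {k' : ℕ} (hkk' : k ≤ k') :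
    blockIdAt B k ≤ blockIdAt B k' :=
  le_blockIdAt (blockIdAt_le.trans hkk') (getD_blockIdAt_ne_zero h0)

end BlockId

namespace isSuffixArray

variable [LinearOrder A] {t : List A} {sa : ℕ → ℕ}

lemma lt_length (hsa : isSuffixArray t sa) {p : ℕ} (hp : p < t.length) : sa p < t.length :=
  hsa.1.1 hp

lemma injective (hsa : isSuffixArray t sa) {p q : ℕ} (hp : p < t.length) (hq : q < t.length)
    (h : sa p = sa q) : p = q :=
  hsa.1.2.1 hp hq h

lemma lt_length_append {t0 t1 : List A} (hsa : isSuffixArray (t0 ++ t1) sa) {p : ℕ}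
    (hp : p < t0.length + t1.length) : sa p < t0.length + t1.length := by
  simpa using hsa.lt_length (by simpa using hp)

lemma injective_append {t0 t1 : List A} (hsa : isSuffixArray (t0 ++ t1) sa) {p q : ℕ}
    (hp : p < t0.length + t1.length) (hq : q < t0.length + t1.length) (h : sa p = sa q) :
    p = q :=
  hsa.injective (by simpa using hp) (by simpa using hq) h

lemma perm_map_range'_append {t0 t1 : List A} (hsa : isSuffixArray (t0 ++ t1) sa) :
    ((List.range (t0.length + t1.length)).map sa).Perm
      (List.range' 0 (t0.length + t1.length)) := by
  refine List.perm_range'_of_nodup (List.nodup_range.map_on fun p hp p' hp' hpp' => ?_)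
    (fun x hx => ?_) (by simp)
  · exact hsa.injective_append (List.mem_range.mp hp) (List.mem_range.mp hp') hpp'
  · obtain ⟨p, hp, rfl⟩ := List.mem_map.mp hx
    have := hsa.lt_length_append (List.mem_range.mp hp)
    omega

end isSuffixArray

lemma bwtList_getD [LinearOrder A] [Inhabited A] {t : List A} {sa : ℕ → ℕ} {r : ℕ}
    (hr : r < t.length) : (bwtList t sa).getD r default = bwtOf t sa r := by
  simp [bwtList, hr]

section

variable [LinearOrder A] [Inhabited A]

def IsSentinel (t0 t1 : List A) (c : A) : Prop := c = t0.getLast! ∨ c = t1.getLast!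

instance {t0 t1 : List A} (c : A) : Decidable (IsSentinel t0 t1 c) :=
  inferInstanceAs (Decidable (_ ∨ _))

end

namespace Sentinels

variable [LinearOrder A] [Inhabited A] {t0 t1 : List A}

lemma length_pos_left (hs : Sentinels t0 t1) : 0 < t0.length := List.length_pos_iff.mpr hs.1

lemma length_pos_right (hs : Sentinels t0 t1) : 0 < t1.length := List.length_pos_iff.mpr hs.2.1

lemma getD_left (hs : Sentinels t0 t1) :
    (t0 ++ t1).getD (t0.length - 1) default = t0.getLast! := by
  rw [List.getD_append _ _ _ _ (by have := hs.length_pos_left; omega),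
    List.getLast!_eq_getD hs.1]

lemma getD_right (hs : Sentinels t0 t1) :
    (t0 ++ t1).getD (t0.length + t1.length - 1) default = t1.getLast! := by
  have := hs.length_pos_right
  rw [List.getD_append_right _ _ _ _ (by omega), List.getLast!_eq_getD hs.2.1]
  congr 1
  omega

lemma count_eq_one (hs : Sentinels t0 t1) {c : A} (hc : IsSentinel t0 t1 c) :
    (t0 ++ t1).count c = 1 := by
  rcases hc with rfl | rfl
  exacts [hs.2.2.2.2.2.1, hs.2.2.2.2.2.2]

lemma eq_of_getD_eq (hs : Sentinels t0 t1) {i j : ℕ} (hi : i < t0.length + t1.length)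
    (hj : j < t0.length + t1.length) (hc : IsSentinel t0 t1 ((t0 ++ t1).getD i default))
    (h : (t0 ++ t1).getD i default = (t0 ++ t1).getD j default) : i = j := by
  have hi' : i < (t0 ++ t1).length := by simpa using hi
  have hj' : j < (t0 ++ t1).length := by simpa using hj
  rw [List.getD_eq_getElem _ _ hi'] at hc h
  rw [List.getD_eq_getElem _ _ hj'] at h
  exact List.eq_of_getElem_eq_of_count_eq_one (hs.count_eq_one hc) hi' hj' rfl h.symm

lemma isSentinel_getD_iff (hs : Sentinels t0 t1) {i : ℕ} (hi : i < t0.length + t1.length) :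
    IsSentinel t0 t1 ((t0 ++ t1).getD i default) ↔
      i = t0.length - 1 ∨ i = t0.length + t1.length - 1 := by
  have := hs.length_pos_left
  constructor
  · rintro (hc | hc)
    · exact Or.inl (hs.eq_of_getD_eq hi (by omega) (Or.inl hc) (hc.trans hs.getD_left.symm))
    · exact Or.inr (hs.eq_of_getD_eq hi (by omega) (Or.inr hc) (hc.trans hs.getD_right.symm))
  · rintro (rfl | rfl)
    exacts [Or.inl hs.getD_left, Or.inr hs.getD_right]

end Sentinels

namespace Gap

def nativeSuffix (t0 t1 : List A) (i : ℕ) : List A :=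
  if i < t0.length then t0.drop i else t1.drop (i - t0.length)

def key (t0 t1 : List A) (h i : ℕ) : List A := (nativeSuffix t0 t1 i).take h

/-- Cyclic predecessor of position `i` within its own string: the position of the BWT symbol
of the suffix starting at `i`. -/
def prevPos (n0 n1 i : ℕ) : ℕ :=
  if i = 0 then n0 - 1 else if i = n0 then n0 + n1 - 1 else i - 1

def part (t0 t1 : List A) (b : Bool) : List A := if b then t1 else t0

def partSA (sa0 sa1 : ℕ → ℕ) (b : Bool) : ℕ → ℕ := if b then sa1 else sa0

/-- Position in `t0 ++ t1` of the `r`-th smallest suffix of `part t0 t1 b`. -/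
def globalStart (n0 : ℕ) (sa0 sa1 : ℕ → ℕ) (b : Bool) (r : ℕ) : ℕ :=
  (if b then n0 else 0) + partSA sa0 sa1 b r

/-- Position in `t0 ++ t1` of the suffix represented by entry `p` of the bit vector `Z`. -/
def source (n0 : ℕ) (sa0 sa1 : ℕ → ℕ) (Z : List Bool) (p : ℕ) : ℕ :=
  globalStart n0 sa0 sa1 (Z.getD p false) ((Z.take p).count (Z.getD p false))

section NativeSuffix

variable {t0 t1 : List A}

lemma nativeSuffix_isPrefix (i : ℕ) : nativeSuffix t0 t1 i <+: (t0 ++ t1).drop i := by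
  unfold nativeSuffix
  split_ifs with h
  · rw [List.drop_append, Nat.sub_eq_zero_of_le h.le, List.drop_zero]
    exact List.prefix_append _ _
  · rw [List.drop_append, List.drop_eq_nil_of_le (as := t0) (by omega), List.nil_append]

lemma nativeSuffix_eq_take (i : ℕ) :
    nativeSuffix t0 t1 i = ((t0 ++ t1).drop i).take (nativeSuffix t0 t1 i).length :=
  List.prefix_iff_eq_take.mp (nativeSuffix_isPrefix i)

lemma length_nativeSuffix (i : ℕ) : (nativeSuffix t0 t1 i).length =
    (if i < t0.length then t0.length else t0.length + t1.length) - i := by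
  unfold nativeSuffix; split_ifs <;> simp only [List.length_drop]; omega

variable [LinearOrder A] [Inhabited A]

lemma nativeSuffix_eq_cons (hs : Sentinels t0 t1) {i : ℕ} (hi : i < t0.length + t1.length) :
    nativeSuffix t0 t1 i = (t0 ++ t1).getD i default ::
      (if IsSentinel t0 t1 ((t0 ++ t1).getD i default) then []
        else nativeSuffix t0 t1 (i + 1)) := by
  have := hs.length_pos_left
  have := hs.length_pos_right
  rw [if_congr (hs.isSentinel_getD_iff hi) rfl rfl]
  unfold nativeSuffix
  by_cases hi0 : i < t0.length
  · rw [if_pos hi0, List.drop_eq_getElem_cons hi0, List.getD_append _ _ _ _ hi0,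
      List.getD_eq_getElem _ _ hi0]
    by_cases hlast : i + 1 = t0.length
    · rw [if_pos (by omega), hlast, List.drop_length]
    · rw [if_neg (by omega), if_pos (by omega)]
  · have hi1 : i - t0.length < t1.length := by omega
    rw [if_neg hi0, List.drop_eq_getElem_cons hi1, List.getD_append_right _ _ _ _ (by omega),
      List.getD_eq_getElem _ _ hi1]
    by_cases hlast : i - t0.length + 1 = t1.length
    · rw [if_pos (by omega), hlast, List.drop_length]
    · rw [if_neg (by omega), if_neg (by omega), Nat.sub_add_comm (by omega)]

lemma head?_key_succ (hs : Sentinels t0 t1) {h i : ℕ} (hi : i < t0.length + t1.length) :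
    (key t0 t1 (h + 1) i).head? = some ((t0 ++ t1).getD i default) := by
  rw [key, nativeSuffix_eq_cons hs hi]
  rfl

lemma eq_of_head?_key_succ (hs : Sentinels t0 t1) {h i j : ℕ} {c : A}
    (hi : i < t0.length + t1.length) (hj : j < t0.length + t1.length) (hc : IsSentinel t0 t1 c)
    (hki : (key t0 t1 (h + 1) i).head? = some c) (hkj : (key t0 t1 (h + 1) j).head? = some c) :
    i = j := by
  rw [head?_key_succ hs hi, Option.some.injEq] at hki
  rw [head?_key_succ hs hj, Option.some.injEq] at hkj
  exact hs.eq_of_getD_eq hi hj (hki ▸ hc) (hki.trans hkj.symm)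

lemma nativeSuffix_prevPos (hs : Sentinels t0 t1) {i : ℕ} (hi : i < t0.length + t1.length) :
    nativeSuffix t0 t1 (prevPos t0.length t1.length i) =
      (t0 ++ t1).getD (prevPos t0.length t1.length i) default ::
        (if IsSentinel t0 t1 ((t0 ++ t1).getD (prevPos t0.length t1.length i) default) then []
          else nativeSuffix t0 t1 i) := by
  have := hs.length_pos_left
  have hp : prevPos t0.length t1.length i < t0.length + t1.length := by
    unfold prevPos; split_ifs <;> omega
  rw [nativeSuffix_eq_cons hs hp, if_congr (hs.isSentinel_getD_iff hp) rfl rfl,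
    if_congr (hs.isSentinel_getD_iff hp) rfl rfl]
  split_ifs with hlast
  · rfl
  · congr 2; unfold prevPos at hlast ⊢; split_ifs at hlast ⊢ <;> omega

lemma key_succ_prevPos (hs : Sentinels t0 t1) {h i : ℕ} (hi : i < t0.length + t1.length) :
    key t0 t1 (h + 1) (prevPos t0.length t1.length i) =
      (t0 ++ t1).getD (prevPos t0.length t1.length i) default ::
        (if IsSentinel t0 t1 ((t0 ++ t1).getD (prevPos t0.length t1.length i) default) then []
          else key t0 t1 h i) := by
  rw [key, nativeSuffix_prevPos hs hi, List.take_succ_cons]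
  split_ifs <;> simp [key]

/-- Each native suffix ends with a sentinel that occurs nowhere else, so it is never a prefix of
another suffix of `t0 ++ t1`. -/
lemma lcpLen_drop_lt_length_nativeSuffix (hs : Sentinels t0 t1) {i j : ℕ}
    (hi : i < t0.length + t1.length) (hj : j < t0.length + t1.length) (hij : i ≠ j) :
    lcpLen ((t0 ++ t1).drop i) ((t0 ++ t1).drop j) < (nativeSuffix t0 t1 j).length := by
  set L := (nativeSuffix t0 t1 j).length with hL
  have hLj : 0 < L ∧ j + L ≤ t0.length + t1.length := by
    rw [hL, length_nativeSuffix]; split_ifs <;> omega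
  have hlast : IsSentinel t0 t1 ((t0 ++ t1).getD (j + (L - 1)) default) := by
    have := hs.length_pos_left
    rw [hs.isSentinel_getD_iff (by omega), hL, length_nativeSuffix]
    split_ifs <;> omega
  by_contra! hle
  have hlcp := lcpLen_le_length_left ((t0 ++ t1).drop i) ((t0 ++ t1).drop j)
  simp only [List.length_drop, List.length_append] at hlcp
  have heq := getD_eq_getD_of_lt_lcpLen default (u := (t0 ++ t1).drop i)
    (v := (t0 ++ t1).drop j) (k := L - 1) (by omega)
  simp only [List.getD_eq_getElem?_getD, List.getElem?_drop] at heq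
  have := hs.eq_of_getD_eq (by omega) (by omega) hlast heq.symm
  omega

lemma lcpLen_nativeSuffix (hs : Sentinels t0 t1) {i j : ℕ} (hi : i < t0.length + t1.length)
    (hj : j < t0.length + t1.length) (hij : i ≠ j) :
    lcpLen (nativeSuffix t0 t1 i) (nativeSuffix t0 t1 j) =
      lcpLen ((t0 ++ t1).drop i) ((t0 ++ t1).drop j) := by
  have hlt_j := lcpLen_drop_lt_length_nativeSuffix hs hi hj hij
  have hlt_i := lcpLen_drop_lt_length_nativeSuffix hs hj hi hij.symm
  rw [lcpLen_comm] at hlt_i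
  rw [nativeSuffix_eq_take i, nativeSuffix_eq_take j, lcpLen_take_take]
  omega

lemma lcpLen_nativeSuffix_lt_length (hs : Sentinels t0 t1) {i j : ℕ}
    (hi : i < t0.length + t1.length) (hj : j < t0.length + t1.length) (hij : i ≠ j) :
    lcpLen (nativeSuffix t0 t1 i) (nativeSuffix t0 t1 j) < (nativeSuffix t0 t1 i).length := by
  rw [lcpLen_comm, lcpLen_nativeSuffix hs hj hi hij.symm]
  exact lcpLen_drop_lt_length_nativeSuffix hs hj hi hij.symm

lemma nativeSuffix_lt_nativeSuffix_iff (hs : Sentinels t0 t1) {i j : ℕ}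
    (hi : i < t0.length + t1.length) (hj : j < t0.length + t1.length) (hij : i ≠ j) :
    nativeSuffix t0 t1 i < nativeSuffix t0 t1 j ↔ (t0 ++ t1).drop i < (t0 ++ t1).drop j := by
  have hlt_j := lcpLen_drop_lt_length_nativeSuffix hs hi hj hij
  have hlt_i := lcpLen_drop_lt_length_nativeSuffix hs hj hi hij.symm
  rw [lcpLen_comm] at hlt_i
  rw [nativeSuffix_eq_take i, nativeSuffix_eq_take j]
  exact take_lt_take_iff_of_lcpLen_lt hlt_i hlt_j

end NativeSuffix

section SuffixArray

variable [LinearOrder A] {t0 t1 : List A} {sa01 : ℕ → ℕ}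

lemma lcpArr_eq_neg_one {j : ℕ} (hj : j = 0 ∨ t0.length + t1.length ≤ j) :
    lcpArr (t0 ++ t1) sa01 j = -1 := by
  rw [lcpArr, if_pos (by simpa using hj)]

variable [Inhabited A]

lemma lcpArr_eq_lcpLen (hs : Sentinels t0 t1) (hsa01 : isSuffixArray (t0 ++ t1) sa01) {j : ℕ}
    (hj0 : 0 < j) (hj : j < t0.length + t1.length) :
    lcpArr (t0 ++ t1) sa01 j =
      lcpLen (nativeSuffix t0 t1 (sa01 (j - 1))) (nativeSuffix t0 t1 (sa01 j)) := by
  have hne : sa01 (j - 1) ≠ sa01 j := fun h => by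
    have := hsa01.injective_append (by omega) hj h
    omega
  rw [lcpArr, if_neg (by simp; omega), lcpLen_nativeSuffix hs
    (hsa01.lt_length_append (by omega)) (hsa01.lt_length_append hj) hne]

lemma nativeSuffix_lt_of_lt (hs : Sentinels t0 t1) (hsa01 : isSuffixArray (t0 ++ t1) sa01)
    {p q : ℕ} (hpq : p < q) (hq : q < t0.length + t1.length) :
    nativeSuffix t0 t1 (sa01 p) < nativeSuffix t0 t1 (sa01 q) := by
  have hne : sa01 p ≠ sa01 q := fun h => by
    have := hsa01.injective_append (by omega) hq h
    omega
  rw [nativeSuffix_lt_nativeSuffix_iff hs (hsa01.lt_length_append (by omega))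
    (hsa01.lt_length_append hq) hne]
  exact hsa01.2 p q hpq (by simpa using hq)

lemma key_le_key (hs : Sentinels t0 t1) (hsa01 : isSuffixArray (t0 ++ t1) sa01) {h p q : ℕ}
    (hpq : p ≤ q) (hq : q < t0.length + t1.length) :
    key t0 t1 h (sa01 p) ≤ key t0 t1 h (sa01 q) := by
  rcases hpq.lt_or_eq with hlt | rfl
  · exact List.take_le_take_of_lt h (nativeSuffix_lt_of_lt hs hsa01 hlt hq)
  · exact le_rfl

lemma le_lcpArr_iff_key_eq (hs : Sentinels t0 t1) (hsa01 : isSuffixArray (t0 ++ t1) sa01)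
    {h j : ℕ} (hj0 : 0 < j) (hj : j < t0.length + t1.length) :
    (h : ℤ) ≤ lcpArr (t0 ++ t1) sa01 j ↔
      key t0 t1 h (sa01 (j - 1)) = key t0 t1 h (sa01 j) := by
  have hne : sa01 (j - 1) ≠ sa01 j := fun h => by
    have := hsa01.injective_append (by omega) hj h
    omega
  rw [lcpArr_eq_lcpLen hs hsa01 hj0 hj, Nat.cast_le, key, key, take_eq_take_iff_le_lcpLen
    (lcpLen_nativeSuffix_lt_length hs (hsa01.lt_length_append (by omega))
      (hsa01.lt_length_append hj) hne)]

lemma key_eq_of_forall_le_lcpArr (hs : Sentinels t0 t1) (hsa01 : isSuffixArray (t0 ++ t1) sa01)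
    {h p q : ℕ} (hpq : p ≤ q) (hq : q < t0.length + t1.length)
    (hmid : ∀ i, p < i → i ≤ q → (h : ℤ) ≤ lcpArr (t0 ++ t1) sa01 i) :
    key t0 t1 h (sa01 p) = key t0 t1 h (sa01 q) := by
  induction q, hpq using Nat.le_induction with
  | base => rfl
  | succ q hpq ih =>
    rw [ih (by omega) fun i hi hiq => hmid i hi (by omega)]
    exact (le_lcpArr_iff_key_eq hs hsa01 (by omega) hq).mp (hmid (q + 1) (by omega) le_rfl)

lemma eq_of_key_eq_of_lcpArr_lt (hs : Sentinels t0 t1) (hsa01 : isSuffixArray (t0 ++ t1) sa01)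
    {h b b' : ℕ} (hb : b < t0.length + t1.length) (hb' : b' < t0.length + t1.length)
    (hlcp : lcpArr (t0 ++ t1) sa01 b < h) (hlcp' : lcpArr (t0 ++ t1) sa01 b' < h)
    (hkey : key t0 t1 h (sa01 b) = key t0 t1 h (sa01 b')) : b = b' := by
  wlog hlt : b < b' generalizing b b'
  · rcases Nat.lt_or_ge b' b with h' | h'
    · exact (this hb' hb hlcp' hlcp hkey.symm h').symm
    · omega
  have hle : key t0 t1 h (sa01 b') ≤ key t0 t1 h (sa01 (b' - 1)) :=
    hkey ▸ key_le_key hs hsa01 (by omega) (by omega)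
  have hprev := le_antisymm (key_le_key hs hsa01 (by omega) hb') hle
  exact absurd ((le_lcpArr_iff_key_eq hs hsa01 (by omega) hb').mpr hprev) (not_le.mpr hlcp')

end SuffixArray

section Parts

variable [LinearOrder A] {t0 t1 : List A} {sa0 sa1 : ℕ → ℕ}

lemma isSuffixArray_part (hsa0 : isSuffixArray t0 sa0) (hsa1 : isSuffixArray t1 sa1) (b : Bool) :
    isSuffixArray (part t0 t1 b) (partSA sa0 sa1 b) := by
  cases b
  exacts [hsa0, hsa1]

lemma globalStart_mem (hsa0 : isSuffixArray t0 sa0) (hsa1 : isSuffixArray t1 sa1) {b : Bool}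
    {r : ℕ} (hr : r < (part t0 t1 b).length) :
    (if b then t0.length else 0) ≤ globalStart t0.length sa0 sa1 b r ∧
      globalStart t0.length sa0 sa1 b r < (if b then t0.length else 0) + (part t0 t1 b).length := by
  have := (isSuffixArray_part hsa0 hsa1 b).lt_length hr
  unfold globalStart
  omega

lemma globalStart_injective (hsa0 : isSuffixArray t0 sa0) (hsa1 : isSuffixArray t1 sa1)
    {b : Bool} {r r' : ℕ} (hr : r < (part t0 t1 b).length) (hr' : r' < (part t0 t1 b).length)
    (h : globalStart t0.length sa0 sa1 b r = globalStart t0.length sa0 sa1 b r') : r = r' :=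
  (isSuffixArray_part hsa0 hsa1 b).injective hr hr' (by unfold globalStart at h; omega)

lemma nativeSuffix_globalStart (hsa0 : isSuffixArray t0 sa0) (hsa1 : isSuffixArray t1 sa1)
    {b : Bool} {r : ℕ} (hr : r < (part t0 t1 b).length) :
    nativeSuffix t0 t1 (globalStart t0.length sa0 sa1 b r) =
      (part t0 t1 b).drop (partSA sa0 sa1 b r) := by
  have := (isSuffixArray_part hsa0 hsa1 b).lt_length hr
  cases b <;> simp_all [nativeSuffix, globalStart, part, partSA]

lemma key_globalStart_mono (hsa0 : isSuffixArray t0 sa0) (hsa1 : isSuffixArray t1 sa1)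
    {h : ℕ} {b : Bool} {r r' : ℕ} (hrr' : r ≤ r') (hr' : r' < (part t0 t1 b).length) :
    key t0 t1 h (globalStart t0.length sa0 sa1 b r) ≤
      key t0 t1 h (globalStart t0.length sa0 sa1 b r') := by
  rcases hrr'.lt_or_eq with hlt | rfl
  · rw [key, key, nativeSuffix_globalStart hsa0 hsa1 (hlt.trans hr'),
      nativeSuffix_globalStart hsa0 hsa1 hr']
    exact List.take_le_take_of_lt h ((isSuffixArray_part hsa0 hsa1 b).2 r r' hlt hr')
  · exact le_rfl

lemma perm_map_globalStart (hsa0 : isSuffixArray t0 sa0) (hsa1 : isSuffixArray t1 sa1) (b : Bool) :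
    ((List.range (part t0 t1 b).length).map (globalStart t0.length sa0 sa1 b)).Perm
      (List.range' (if b then t0.length else 0) (part t0 t1 b).length) :=
  List.perm_range'_of_nodup
    (List.nodup_range.map_on fun _ hr _ hr' hrr' =>
      globalStart_injective hsa0 hsa1 (List.mem_range.mp hr) (List.mem_range.mp hr') hrr')
    (fun x hx => by
      obtain ⟨r, hr, rfl⟩ := List.mem_map.mp hx
      exact globalStart_mem hsa0 hsa1 (List.mem_range.mp hr))
    (by simp)

end Parts

section Source

variable {t0 t1 : List A} {sa0 sa1 : ℕ → ℕ} {Z : List Bool}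

lemma rank_lt_length_part (hZc : ∀ b, Z.count b = (part t0 t1 b).length) {p : ℕ}
    (hp : p < Z.length) :
    (Z.take p).count (Z.getD p false) < (part t0 t1 (Z.getD p false)).length := by
  rw [← hZc, List.getD_eq_getElem _ _ hp]
  simpa using List.count_take_lt_count_take_s4 hp hp

variable [LinearOrder A]

lemma source_mem (hsa0 : isSuffixArray t0 sa0) (hsa1 : isSuffixArray t1 sa1)
    (hZc : ∀ b, Z.count b = (part t0 t1 b).length) {p : ℕ} (hp : p < Z.length) :
    (if Z.getD p false then t0.length else 0) ≤ source t0.length sa0 sa1 Z p ∧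
      source t0.length sa0 sa1 Z p <
        (if Z.getD p false then t0.length else 0) + (part t0 t1 (Z.getD p false)).length :=
  globalStart_mem hsa0 hsa1 (rank_lt_length_part hZc hp)

lemma source_lt (hsa0 : isSuffixArray t0 sa0) (hsa1 : isSuffixArray t1 sa1)
    (hZc : ∀ b, Z.count b = (part t0 t1 b).length) {p : ℕ} (hp : p < Z.length) :
    source t0.length sa0 sa1 Z p < t0.length + t1.length := by
  have := source_mem hsa0 hsa1 hZc hp
  cases hb : Z.getD p false <;> simp only [hb, part, Bool.false_eq_true, if_false, if_true] at this
    <;> omega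

lemma source_injective (hsa0 : isSuffixArray t0 sa0) (hsa1 : isSuffixArray t1 sa1)
    (hZc : ∀ b, Z.count b = (part t0 t1 b).length) {p q : ℕ} (hp : p < Z.length)
    (hq : q < Z.length) (h : source t0.length sa0 sa1 Z p = source t0.length sa0 sa1 Z q) :
    p = q := by
  have hbit : Z.getD p false = Z.getD q false := by
    have hp' := source_mem hsa0 hsa1 hZc hp
    have hq' := source_mem hsa0 hsa1 hZc hq
    cases hbp : Z.getD p false <;> cases hbq : Z.getD q false <;>
      simp only [hbp, hbq, part, Bool.false_eq_true, Bool.true_eq_false, if_false, if_true]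
        at hp' hq' ⊢ <;> omega
  have hrank := globalStart_injective hsa0 hsa1 (rank_lt_length_part hZc hp)
    (hbit ▸ rank_lt_length_part hZc hq) (by rw [source, source, ← hbit] at h; exact h)
  rw [List.getD_eq_getElem _ _ hp] at hrank hbit
  rw [List.getD_eq_getElem _ _ hq] at hbit
  rcases Nat.lt_trichotomy p q with hpq | rfl | hqp
  · exact absurd hrank (List.count_take_lt_count_take_s4 hp hpq).ne
  · rfl
  · rw [hbit] at hrank
    exact absurd hrank.symm (List.count_take_lt_count_take_s4 hq hqp).ne

lemma keyAt_eq_key (hsa0 : isSuffixArray t0 sa0) (hsa1 : isSuffixArray t1 sa1)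
    (hZc : ∀ b, Z.count b = (part t0 t1 b).length) {h p : ℕ} (hp : p < Z.length) :
    keyAt t0 t1 sa0 sa1 h Z p = key t0 t1 h (source t0.length sa0 sa1 Z p) := by
  rw [key, source, nativeSuffix_globalStart hsa0 hsa1 (rank_lt_length_part hZc hp), keyAt]
  cases Z.getD p false <;> rfl

end Source

section PrevPos

variable [LinearOrder A] [Inhabited A] {t0 t1 : List A} {sa0 sa1 : ℕ → ℕ}

lemma prevPos_mem (hs : Sentinels t0 t1) {b : Bool} {i : ℕ}
    (hi : (if b then t0.length else 0) ≤ i ∧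
      i < (if b then t0.length else 0) + (part t0 t1 b).length) :
    (if b then t0.length else 0) ≤ prevPos t0.length t1.length i ∧
      prevPos t0.length t1.length i < (if b then t0.length else 0) + (part t0 t1 b).length := by
  have := hs.length_pos_left
  have := hs.length_pos_right
  cases b <;> simp only [part, prevPos, Bool.false_eq_true, if_false, if_true] at hi ⊢ <;>
    split_ifs <;> omega

lemma prevPos_injective (hs : Sentinels t0 t1) {i j : ℕ} (hi : i < t0.length + t1.length)
    (hj : j < t0.length + t1.length)
    (h : prevPos t0.length t1.length i = prevPos t0.length t1.length j) : i = j := by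
  have := hs.length_pos_left
  have := hs.length_pos_right
  unfold prevPos at h
  split_ifs at h <;> omega

lemma bwtOf_part (hs : Sentinels t0 t1) (hsa0 : isSuffixArray t0 sa0)
    (hsa1 : isSuffixArray t1 sa1) {b : Bool} {r : ℕ} (hr : r < (part t0 t1 b).length) :
    bwtOf (part t0 t1 b) (partSA sa0 sa1 b) r =
      (t0 ++ t1).getD (prevPos t0.length t1.length (globalStart t0.length sa0 sa1 b r))
        default := by
  have := (isSuffixArray_part hsa0 hsa1 b).lt_length hr
  have := hs.length_pos_left
  cases b <;> simp only [part, partSA, globalStart, Bool.false_eq_true, if_false, if_true,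
    zero_add] at this ⊢ <;> unfold bwtOf prevPos
  all_goals
    split_ifs <;>
      first
      | omega
      | rw [List.getD_append _ _ _ _ (by omega)]
      | (rw [List.getD_append_right _ _ _ _ (by omega)]; congr 1; omega)

end PrevPos

section Tags

variable [LinearOrder A] [Inhabited A]

/-- Entry `k` of `Z` tagged with the BWT symbol of its suffix and the id of its `h`-block. -/
def tag (bwt0 bwt1 : List A) (Z : List Bool) (B : List ℕ) (k : ℕ) : Bool × A × ℕ :=
  (Z.getD k false,
    (if Z.getD k false then bwt1.getD ((Z.take k).count true) default
      else bwt0.getD ((Z.take k).count false) default),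
    blockIdAt B k)

def sortedTags (bwt0 bwt1 : List A) (Z : List Bool) (B : List ℕ) : List (Bool × A × ℕ) :=
  ((List.range Z.length).map (tag bwt0 bwt1 Z B)).mergeSort fun e e' => decide (e.2.1 ≤ e'.2.1)

/-- The `(h + 1)`-key determined by a tag whose block id is the start of an `h`-block. -/
def tagKey (t0 t1 : List A) (sa01 : ℕ → ℕ) (h : ℕ) (e : Bool × A × ℕ) : List A :=
  e.2.1 :: (if IsSentinel t0 t1 e.2.1 then [] else key t0 t1 h (sa01 e.2.2))

variable {bwt0 bwt1 : List A} {Z : List Bool} {B : List ℕ}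

lemma gstep_fst (h : ℕ) :
    (gstep bwt0 bwt1 h (Z, B)).1 = (sortedTags bwt0 bwt1 Z B).map Prod.fst := rfl

lemma length_gstep_snd (h : ℕ) : (gstep bwt0 bwt1 h (Z, B)).2.length = B.length := by
  simp [gstep]

lemma getD_gstep_snd (h : ℕ) {j : ℕ} (hj : j < B.length) :
    (gstep bwt0 bwt1 h (Z, B)).2.getD j 0 =
      if B.getD j 0 ≠ 0 then B.getD j 0
      else if j < (sortedTags bwt0 bwt1 Z B).length ∧
          (j = 0 ∨ ((sortedTags bwt0 bwt1 Z B).getD (j - 1) default).2 ≠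
            ((sortedTags bwt0 bwt1 Z B).getD j default).2)
        then h else 0 := by
  unfold gstep
  dsimp only
  rw [List.getD_eq_getElem _ _ (by simpa using hj), List.getElem_map, List.getElem_range]
  rfl

lemma length_sortedTags : (sortedTags bwt0 bwt1 Z B).length = Z.length := by
  simp [sortedTags]

lemma count_map_fst_sortedTags (b : Bool) :
    ((sortedTags bwt0 bwt1 Z B).map Prod.fst).count b = Z.count b := by
  rw [sortedTags, ((List.mergeSort_perm _ _).map Prod.fst).count_eq, List.map_map]
  exact congrArg (List.count b) (List.map_getD_range Z false)

lemma exists_tag_of_mem_sortedTags {e : Bool × A × ℕ} (he : e ∈ sortedTags bwt0 bwt1 Z B) :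
    ∃ k < Z.length, tag bwt0 bwt1 Z B k = e := by
  simpa [sortedTags] using he

end Tags

section Iteration

variable [LinearOrder A] {t0 t1 : List A} {sa0 sa1 sa01 : ℕ → ℕ} {Z : List Bool}
  {B : List ℕ}

lemma symbol_tag [Inhabited A] (hs : Sentinels t0 t1) (hsa0 : isSuffixArray t0 sa0)
    (hsa1 : isSuffixArray t1 sa1) (hZc : ∀ b, Z.count b = (part t0 t1 b).length) {k : ℕ}
    (hk : k < Z.length) :
    (tag (bwtList t0 sa0) (bwtList t1 sa1) Z B k).2.1 =
      (t0 ++ t1).getD (prevPos t0.length t1.length (source t0.length sa0 sa1 Z k)) default := by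
  have hr := rank_lt_length_part hZc hk
  rw [source, ← bwtOf_part hs hsa0 hsa1 hr, ← bwtList_getD hr]
  unfold tag
  cases Z.getD k false <;> rfl

structure Invariant (t0 t1 : List A) (sa0 sa1 sa01 : ℕ → ℕ) (h : ℕ) (Z : List Bool)
    (B : List ℕ) : Prop where
  length_Z : Z.length = t0.length + t1.length
  count_Z : ∀ b, Z.count b = (part t0 t1 b).length
  key_source : ∀ p < t0.length + t1.length,
    key t0 t1 h (source t0.length sa0 sa1 Z p) = key t0 t1 h (sa01 p)
  length_B : B.length = t0.length + t1.length + 1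
  marker_iff : ∀ j ≤ t0.length + t1.length,
    B.getD j 0 ≠ 0 ↔ lcpArr (t0 ++ t1) sa01 j < h

namespace Invariant

variable {h : ℕ}

lemma getD_zero_ne_zero (I : Invariant t0 t1 sa0 sa1 sa01 h Z B) : B.getD 0 0 ≠ 0 :=
  (I.marker_iff 0 (Nat.zero_le _)).mpr (by rw [lcpArr_eq_neg_one (Or.inl rfl)]; omega)

lemma lcpArr_blockIdAt_lt (I : Invariant t0 t1 sa0 sa1 sa01 h Z B) {k : ℕ}
    (hk : k < t0.length + t1.length) : lcpArr (t0 ++ t1) sa01 (blockIdAt B k) < h :=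
  (I.marker_iff _ (blockIdAt_le.trans hk.le)).mp (getD_blockIdAt_ne_zero I.getD_zero_ne_zero)

variable [Inhabited A]

lemma key_blockIdAt (I : Invariant t0 t1 sa0 sa1 sa01 h Z B) (hs : Sentinels t0 t1)
    (hsa01 : isSuffixArray (t0 ++ t1) sa01) {k : ℕ} (hk : k < t0.length + t1.length) :
    key t0 t1 h (sa01 (blockIdAt B k)) = key t0 t1 h (sa01 k) :=
  key_eq_of_forall_le_lcpArr hs hsa01 blockIdAt_le hk fun i hi hik => by
    by_contra! hlt
    have := le_blockIdAt hik ((I.marker_iff i (by omega)).mpr hlt)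
    omega

lemma tagKey_tag (I : Invariant t0 t1 sa0 sa1 sa01 h Z B) (hs : Sentinels t0 t1)
    (hsa0 : isSuffixArray t0 sa0) (hsa1 : isSuffixArray t1 sa1)
    (hsa01 : isSuffixArray (t0 ++ t1) sa01) {k : ℕ} (hk : k < t0.length + t1.length) :
    tagKey t0 t1 sa01 h (tag (bwtList t0 sa0) (bwtList t1 sa1) Z B k) =
      key t0 t1 (h + 1) (prevPos t0.length t1.length (source t0.length sa0 sa1 Z k)) := by
  have hkZ : k < Z.length := I.length_Z ▸ hk
  rw [key_succ_prevPos hs (source_lt hsa0 hsa1 I.count_Z hkZ), tagKey,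
    symbol_tag hs hsa0 hsa1 I.count_Z hkZ, I.key_source k hk]
  exact congrArg _ (if_congr Iff.rfl rfl (I.key_blockIdAt hs hsa01 hk))

lemma pairwise_tagKey_sortedTags (I : Invariant t0 t1 sa0 sa1 sa01 h Z B) (hs : Sentinels t0 t1)
    (hsa01 : isSuffixArray (t0 ++ t1) sa01) :
    (sortedTags (bwtList t0 sa0) (bwtList t1 sa1) Z B).Pairwise
      fun e e' => tagKey t0 t1 sa01 h e ≤ tagKey t0 t1 sa01 h e' := by
  have hbid : ((List.range Z.length).map (tag (bwtList t0 sa0) (bwtList t1 sa1) Z B)).Pairwise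
      fun e e' => e.2.2 ≤ e'.2.2 :=
    List.pairwise_map.mpr
      (List.pairwise_lt_range.imp fun hlt => blockIdAt_mono I.getD_zero_ne_zero hlt.le)
  refine (List.pairwise_mergeSort_of_pairwise (fun e => e.2.1) hbid).imp_of_mem ?_
  rintro e e' - he' (hlt | ⟨heq, hle⟩)
  · exact (List.cons_lt_cons_iff.mpr (Or.inl hlt)).le
  · obtain ⟨k', hk', rfl⟩ := exists_tag_of_mem_sortedTags he'
    rw [tagKey, tagKey, heq]
    refine List.cons_le_cons_of_le _ ?_
    split_ifs
    · exact le_rfl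
    · exact key_le_key hs hsa01 hle (blockIdAt_le.trans_lt (I.length_Z ▸ hk'))

lemma perm_map_prevPos_source (I : Invariant t0 t1 sa0 sa1 sa01 h Z B) (hs : Sentinels t0 t1)
    (hsa0 : isSuffixArray t0 sa0) (hsa1 : isSuffixArray t1 sa1) :
    ((List.range (t0.length + t1.length)).map
      fun k => prevPos t0.length t1.length (source t0.length sa0 sa1 Z k)).Perm
        (List.range' 0 (t0.length + t1.length)) := by
  have hsrc : ∀ k ∈ List.range (t0.length + t1.length),
      source t0.length sa0 sa1 Z k < t0.length + t1.length := fun k hk =>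
    source_lt hsa0 hsa1 I.count_Z (I.length_Z ▸ List.mem_range.mp hk)
  refine List.perm_range'_of_nodup (List.nodup_range.map_on fun k hk k' hk' hkk' => ?_)
    (fun x hx => ?_) (by simp)
  · exact source_injective hsa0 hsa1 I.count_Z (I.length_Z ▸ List.mem_range.mp hk)
      (I.length_Z ▸ List.mem_range.mp hk') (prevPos_injective hs (hsrc k hk) (hsrc k' hk') hkk')
  · obtain ⟨k, hk, rfl⟩ := List.mem_map.mp hx
    have := hsrc k hk
    have := hs.length_pos_left
    unfold prevPos; split_ifs <;> omega

lemma perm_map_tagKey_sortedTags (I : Invariant t0 t1 sa0 sa1 sa01 h Z B) (hs : Sentinels t0 t1)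
    (hsa0 : isSuffixArray t0 sa0) (hsa1 : isSuffixArray t1 sa1)
    (hsa01 : isSuffixArray (t0 ++ t1) sa01) :
    ((sortedTags (bwtList t0 sa0) (bwtList t1 sa1) Z B).map (tagKey t0 t1 sa01 h)).Perm
      ((List.range (t0.length + t1.length)).map fun p => key t0 t1 (h + 1) (sa01 p)) := by
  calc _ ~ ((List.range Z.length).map (tag (bwtList t0 sa0) (bwtList t1 sa1) Z B)).map
          (tagKey t0 t1 sa01 h) := (List.mergeSort_perm _ _).map _
    _ = ((List.range (t0.length + t1.length)).map
          fun k => prevPos t0.length t1.length (source t0.length sa0 sa1 Z k)).map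
            (key t0 t1 (h + 1)) := by
      rw [List.map_map, List.map_map, I.length_Z]
      exact List.map_congr_left fun k hk =>
        I.tagKey_tag hs hsa0 hsa1 hsa01 (List.mem_range.mp hk)
    _ ~ ((List.range (t0.length + t1.length)).map sa01).map (key t0 t1 (h + 1)) :=
      ((I.perm_map_prevPos_source hs hsa0 hsa1).trans (hsa01.perm_map_range'_append).symm).map _
    _ = _ := List.map_map

lemma map_tagKey_sortedTags (I : Invariant t0 t1 sa0 sa1 sa01 h Z B) (hs : Sentinels t0 t1)
    (hsa0 : isSuffixArray t0 sa0) (hsa1 : isSuffixArray t1 sa1)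
    (hsa01 : isSuffixArray (t0 ++ t1) sa01) :
    (sortedTags (bwtList t0 sa0) (bwtList t1 sa1) Z B).map (tagKey t0 t1 sa01 h) =
      (List.range (t0.length + t1.length)).map fun p => key t0 t1 (h + 1) (sa01 p) :=
  (I.perm_map_tagKey_sortedTags hs hsa0 hsa1 hsa01).eq_of_pairwise'
    (List.pairwise_map.mpr (I.pairwise_tagKey_sortedTags hs hsa01))
    (List.pairwise_map.mpr (List.pairwise_lt_range.imp_of_mem fun _ hq hpq =>
      key_le_key hs hsa01 hpq.le (List.mem_range.mp hq)))

lemma tagKey_getElem_sortedTags (I : Invariant t0 t1 sa0 sa1 sa01 h Z B) (hs : Sentinels t0 t1)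
    (hsa0 : isSuffixArray t0 sa0) (hsa1 : isSuffixArray t1 sa1)
    (hsa01 : isSuffixArray (t0 ++ t1) sa01) {p : ℕ}
    (hp : p < (sortedTags (bwtList t0 sa0) (bwtList t1 sa1) Z B).length) :
    tagKey t0 t1 sa01 h (sortedTags (bwtList t0 sa0) (bwtList t1 sa1) Z B)[p] =
      key t0 t1 (h + 1) (sa01 p) := by
  have := List.getElem_of_eq (I.map_tagKey_sortedTags hs hsa0 hsa1 hsa01) (by simpa using hp)
  simpa using this

lemma perm_map_prevPos_source_filter (I : Invariant t0 t1 sa0 sa1 sa01 h Z B)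
    (hs : Sentinels t0 t1) (hsa0 : isSuffixArray t0 sa0) (hsa1 : isSuffixArray t1 sa1)
    (b : Bool) :
    (((List.range Z.length).filter fun k => Z.getD k false == b).map
      fun k => prevPos t0.length t1.length (source t0.length sa0 sa1 Z k)).Perm
        (List.range' (if b then t0.length else 0) (part t0 t1 b).length) := by
  refine List.perm_range'_of_nodup ((List.nodup_range.filter _).map_on fun k hk k' hk' hkk' => ?_)
    (fun x hx => ?_) (by rw [List.length_map, List.length_filter_range_getD, I.count_Z])
  · have hk := List.mem_range.mp (List.mem_filter.mp hk).1
    have hk' := List.mem_range.mp (List.mem_filter.mp hk').1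
    exact source_injective hsa0 hsa1 I.count_Z hk hk' (prevPos_injective hs
      (source_lt hsa0 hsa1 I.count_Z hk) (source_lt hsa0 hsa1 I.count_Z hk') hkk')
  · obtain ⟨k, hk, rfl⟩ := List.mem_map.mp hx
    obtain ⟨hk, hb⟩ := List.mem_filter.mp hk
    have := source_mem hsa0 hsa1 I.count_Z (List.mem_range.mp hk)
    rw [beq_iff_eq.mp hb] at this
    exact prevPos_mem hs this

lemma map_tagKey_filter_sortedTags (I : Invariant t0 t1 sa0 sa1 sa01 h Z B)
    (hs : Sentinels t0 t1) (hsa0 : isSuffixArray t0 sa0) (hsa1 : isSuffixArray t1 sa1)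
    (hsa01 : isSuffixArray (t0 ++ t1) sa01) (b : Bool) :
    ((sortedTags (bwtList t0 sa0) (bwtList t1 sa1) Z B).filter (fun e => e.1 == b)).map
        (tagKey t0 t1 sa01 h) =
      (List.range (part t0 t1 b).length).map
        fun r => key t0 t1 (h + 1) (globalStart t0.length sa0 sa1 b r) := by
  refine List.Perm.eq_of_pairwise'
    (List.pairwise_map.mpr ((I.pairwise_tagKey_sortedTags hs hsa01).filter _))
    (List.pairwise_map.mpr (List.pairwise_lt_range.imp_of_mem fun _ hr hrr' =>
      key_globalStart_mono hsa0 hsa1 hrr'.le (List.mem_range.mp hr))) ?_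
  calc _ ~ (((List.range Z.length).map (tag (bwtList t0 sa0) (bwtList t1 sa1) Z B)).filter
          (fun e => e.1 == b)).map (tagKey t0 t1 sa01 h) :=
        ((List.mergeSort_perm _ _).filter _).map _
    _ = (((List.range Z.length).filter fun k => Z.getD k false == b).map
          fun k => prevPos t0.length t1.length (source t0.length sa0 sa1 Z k)).map
            (key t0 t1 (h + 1)) := by
      rw [List.filter_map, List.map_map, List.map_map]
      exact List.map_congr_left fun k hk => I.tagKey_tag hs hsa0 hsa1 hsa01
        (I.length_Z ▸ List.mem_range.mp (List.mem_filter.mp hk).1)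
    _ ~ ((List.range (part t0 t1 b).length).map (globalStart t0.length sa0 sa1 b)).map
          (key t0 t1 (h + 1)) :=
      ((I.perm_map_prevPos_source_filter hs hsa0 hsa1 b).trans
        (perm_map_globalStart hsa0 hsa1 b).symm).map _
    _ = _ := List.map_map

lemma key_source_succ (I : Invariant t0 t1 sa0 sa1 sa01 h Z B) (hs : Sentinels t0 t1)
    (hsa0 : isSuffixArray t0 sa0) (hsa1 : isSuffixArray t1 sa1)
    (hsa01 : isSuffixArray (t0 ++ t1) sa01) {p : ℕ} (hp : p < t0.length + t1.length) :
    key t0 t1 (h + 1) (source t0.length sa0 sa1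
        ((sortedTags (bwtList t0 sa0) (bwtList t1 sa1) Z B).map Prod.fst) p) =
      key t0 t1 (h + 1) (sa01 p) := by
  set S := sortedTags (bwtList t0 sa0) (bwtList t1 sa1) Z B
  have hpS : p < S.length := by rw [length_sortedTags, I.length_Z]; exact hp
  obtain ⟨hr, hget⟩ := List.getElem_filter_countP_take (fun e => e.1 == S[p].1) hpS (by simp)
  have hsrc : source t0.length sa0 sa1 (S.map Prod.fst) p =
      globalStart t0.length sa0 sa1 S[p].1 ((S.take p).countP fun e => e.1 == S[p].1) := by
    simp [source, hpS, ← List.map_take, List.count_eq_countP, List.countP_map]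
    rfl
  have hF := List.getElem_of_eq (I.map_tagKey_filter_sortedTags hs hsa0 hsa1 hsa01 S[p].1)
    (by simpa using hr)
  simp only [List.getElem_map, List.getElem_range] at hF
  rw [hsrc, ← hF, hget, I.tagKey_getElem_sortedTags hs hsa0 hsa1 hsa01 hpS]

/-- Whether a new `(h + 1)`-block starts at `j` is read off the tags: the symbol decides, and for
equal non-sentinel symbols the `h`-blocks of the two suffixes decide. -/
lemma snd_getD_sortedTags_eq_iff (I : Invariant t0 t1 sa0 sa1 sa01 h Z B) (hs : Sentinels t0 t1)
    (hsa0 : isSuffixArray t0 sa0) (hsa1 : isSuffixArray t1 sa1)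
    (hsa01 : isSuffixArray (t0 ++ t1) sa01) {j : ℕ} (hj0 : 0 < j)
    (hj : j < t0.length + t1.length) :
    ((sortedTags (bwtList t0 sa0) (bwtList t1 sa1) Z B).getD (j - 1) default).2 =
        ((sortedTags (bwtList t0 sa0) (bwtList t1 sa1) Z B).getD j default).2 ↔
      key t0 t1 (h + 1) (sa01 (j - 1)) = key t0 t1 (h + 1) (sa01 j) := by
  set S := sortedTags (bwtList t0 sa0) (bwtList t1 sa1) Z B
  have hjS : j < S.length := by rw [length_sortedTags, I.length_Z]; exact hj
  have hjS' : j - 1 < S.length := by omega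
  have hkey : tagKey t0 t1 sa01 h S[j - 1] = key t0 t1 (h + 1) (sa01 (j - 1)) :=
    I.tagKey_getElem_sortedTags hs hsa0 hsa1 hsa01 hjS'
  have hkey' : tagKey t0 t1 sa01 h S[j] = key t0 t1 (h + 1) (sa01 j) :=
    I.tagKey_getElem_sortedTags hs hsa0 hsa1 hsa01 hjS
  rw [List.getD_eq_getElem _ _ hjS', List.getD_eq_getElem _ _ hjS, ← hkey, ← hkey']
  refine ⟨fun heq => by simp only [tagKey, heq], fun htag => Prod.ext (List.cons.inj htag).1 ?_⟩
  obtain ⟨hsym, htail⟩ := List.cons.inj htag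
  by_cases hc : IsSentinel t0 t1 S[j - 1].2.1
  · have hhead : (key t0 t1 (h + 1) (sa01 (j - 1))).head? = some S[j - 1].2.1 := by
      rw [← hkey]; rfl
    have hhead' : (key t0 t1 (h + 1) (sa01 j)).head? = some S[j - 1].2.1 := by
      rw [← hkey', ← htag]; rfl
    have := hsa01.injective_append (by omega) hj (eq_of_head?_key_succ hs
      (hsa01.lt_length_append (by omega)) (hsa01.lt_length_append hj) hc hhead hhead')
    omega
  · rw [if_neg hc, if_neg (hsym ▸ hc)] at htail
    obtain ⟨k, hk, hkS⟩ := exists_tag_of_mem_sortedTags (List.getElem_mem hjS')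
    obtain ⟨k', hk', hkS'⟩ := exists_tag_of_mem_sortedTags (List.getElem_mem hjS)
    rw [← hkS, ← hkS'] at htail ⊢
    rw [I.length_Z] at hk hk'
    exact eq_of_key_eq_of_lcpArr_lt hs hsa01 (blockIdAt_le.trans_lt hk)
      (blockIdAt_le.trans_lt hk') (I.lcpArr_blockIdAt_lt hk) (I.lcpArr_blockIdAt_lt hk') htail

lemma marker_iff_succ (I : Invariant t0 t1 sa0 sa1 sa01 h Z B) (hs : Sentinels t0 t1)
    (hsa0 : isSuffixArray t0 sa0) (hsa1 : isSuffixArray t1 sa1)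
    (hsa01 : isSuffixArray (t0 ++ t1) sa01) {j : ℕ} (hj : j ≤ t0.length + t1.length) :
    (gstep (bwtList t0 sa0) (bwtList t1 sa1) (h + 1) (Z, B)).2.getD j 0 ≠ 0 ↔
      lcpArr (t0 ++ t1) sa01 j < (h + 1 : ℕ) := by
  rw [getD_gstep_snd _ (by rw [I.length_B]; omega)]
  by_cases hB : B.getD j 0 ≠ 0
  · have := (I.marker_iff j hj).mp hB
    rw [if_pos hB]
    exact ⟨fun _ => by push_cast; omega, fun _ => hB⟩
  have hge : (h : ℤ) ≤ lcpArr (t0 ++ t1) sa01 j :=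
    not_lt.mp fun hlt => hB ((I.marker_iff j hj).mpr hlt)
  have hj0n : 0 < j ∧ j < t0.length + t1.length := by
    by_contra hout
    rw [lcpArr_eq_neg_one (by omega)] at hge
    omega
  have hlen : j < (sortedTags (bwtList t0 sa0) (bwtList t1 sa1) Z B).length := by
    rw [length_sortedTags, I.length_Z]; exact hj0n.2
  rw [if_neg hB]
  simp only [hlen, true_and, hj0n.1.ne', false_or]
  rw [← not_le, le_lcpArr_iff_key_eq hs hsa01 hj0n.1 hj0n.2,
    ← I.snd_getD_sortedTags_eq_iff hs hsa0 hsa1 hsa01 hj0n.1 hj0n.2]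
  split_ifs with hne
  · exact ⟨fun _ => hne, fun _ => Nat.succ_ne_zero h⟩
  · exact ⟨fun h0 => absurd rfl h0, fun hne' => absurd hne' hne⟩

lemma step (I : Invariant t0 t1 sa0 sa1 sa01 h Z B) (hs : Sentinels t0 t1)
    (hsa0 : isSuffixArray t0 sa0) (hsa1 : isSuffixArray t1 sa1)
    (hsa01 : isSuffixArray (t0 ++ t1) sa01) :
    Invariant t0 t1 sa0 sa1 sa01 (h + 1) (gstep (bwtList t0 sa0) (bwtList t1 sa1) (h + 1) (Z, B)).1
      (gstep (bwtList t0 sa0) (bwtList t1 sa1) (h + 1) (Z, B)).2 where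
  length_Z := by rw [gstep_fst, List.length_map, length_sortedTags, I.length_Z]
  count_Z b := by rw [gstep_fst, count_map_fst_sortedTags, I.count_Z]
  key_source _ hp := by rw [gstep_fst]; exact I.key_source_succ hs hsa0 hsa1 hsa01 hp
  length_B := by rw [length_gstep_snd, I.length_B]
  marker_iff _ hj := I.marker_iff_succ hs hsa0 hsa1 hsa01 hj

end Invariant

variable [Inhabited A]

lemma invariant_zero (hs : Sentinels t0 t1) (bwt0 bwt1 : List A) :
    Invariant t0 t1 sa0 sa1 sa01 0 (gapState bwt0 bwt1 t0.length t1.length 0).1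
      (gapState bwt0 bwt1 t0.length t1.length 0).2 where
  length_Z := by simp [gapState]
  count_Z b := by cases b <;> simp [gapState, part, List.count_replicate]
  key_source _ _ := by simp [key]
  length_B := by have := hs.length_pos_left; simp [gapState]; omega
  marker_iff j hj := by
    have := hs.length_pos_left
    simp only [gapState, CharP.cast_eq_zero]
    rcases j with _ | i
    · simp [lcpArr_eq_neg_one (Or.inl rfl)]
    rw [List.getD_cons_succ]
    rcases Nat.lt_or_ge i (t0.length + t1.length - 1) with hi | hi
    · rw [lcpArr, if_neg (by simp; omega), List.getD_append _ _ _ _ (by simpa using hi)]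
      simp
    · rw [lcpArr_eq_neg_one (Or.inr (by omega)),
        List.getD_append_right _ _ _ _ (by simp; omega)]
      simp [show i - (t0.length + t1.length - 1) = 0 by omega]

lemma invariant_gapState (hs : Sentinels t0 t1) (hsa0 : isSuffixArray t0 sa0)
    (hsa1 : isSuffixArray t1 sa1) (hsa01 : isSuffixArray (t0 ++ t1) sa01) (h : ℕ) :
    Invariant t0 t1 sa0 sa1 sa01 h
      (gapState (bwtList t0 sa0) (bwtList t1 sa1) t0.length t1.length h).1
      (gapState (bwtList t0 sa0) (bwtList t1 sa1) t0.length t1.length h).2 := by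
  induction h with
  | zero => exact invariant_zero hs _ _
  | succ h ih => exact ih.step hs hsa0 hsa1 hsa01

end Iteration

end Gap

/-- at the end of iteration `h` of the modified H&M algorithm,
for every maximal interval `[ℓ,m]` with `lcp01[ℓ] < h`,
`min(lcp01[ℓ+1..m]) ≥ h` and `lcp01[m+1] < h`, the marker array satisfies
`B[ℓ] ≠ 0`, `B[ℓ+1] = ⋯ = B[m] = 0`, `B[m+1] ≠ 0`, and `Z_h[ℓ,m]` is one of
the logical blocks of `Z_h` (all its entries share the same length-`h` key). -/
theorem gap_marker_invariant [LinearOrder A] [Inhabited A]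
    (t0 t1 : List A) (sa0 sa1 sa01 : ℕ → ℕ)
    (hsent : Sentinels t0 t1)
    (hsa0 : isSuffixArray t0 sa0) (hsa1 : isSuffixArray t1 sa1)
    (hsa01 : isSuffixArray (t0 ++ t1) sa01)
    (h ℓ m : ℕ) (hlm : ℓ ≤ m) (hmn : m < t0.length + t1.length)
    (h1 : lcpArr (t0 ++ t1) sa01 ℓ < h)
    (h2 : ∀ i, ℓ < i → i ≤ m → (h : ℤ) ≤ lcpArr (t0 ++ t1) sa01 i)
    (h3 : lcpArr (t0 ++ t1) sa01 (m + 1) < h) :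
    (gapState (bwtList t0 sa0) (bwtList t1 sa1) t0.length t1.length h).2.getD ℓ 0
        ≠ 0 ∧
    (∀ i, ℓ < i → i ≤ m →
      (gapState (bwtList t0 sa0) (bwtList t1 sa1) t0.length t1.length h).2.getD i 0
        = 0) ∧
    (gapState (bwtList t0 sa0) (bwtList t1 sa1) t0.length t1.length h).2.getD
        (m + 1) 0 ≠ 0 ∧
    (∀ p q, ℓ ≤ p → p ≤ q → q ≤ m →
      keyAt t0 t1 sa0 sa1 h
          (gapState (bwtList t0 sa0) (bwtList t1 sa1) t0.length t1.length h).1 p =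
        keyAt t0 t1 sa0 sa1 h
          (gapState (bwtList t0 sa0) (bwtList t1 sa1) t0.length t1.length h).1 q) := by
  have I := Gap.invariant_gapState hsent hsa0 hsa1 hsa01 h
  refine ⟨(I.marker_iff ℓ (by omega)).mpr h1, fun i hi him => ?_,
    (I.marker_iff (m + 1) (by omega)).mpr h3, fun p q hp hpq hqm => ?_⟩
  · by_contra hne
    exact absurd ((I.marker_iff i (by omega)).mp hne) (not_lt.mpr (h2 i hi him))
  · rw [Gap.keyAt_eq_key hsa0 hsa1 I.count_Z (by rw [I.length_Z]; omega),
      Gap.keyAt_eq_key hsa0 hsa1 I.count_Z (by rw [I.length_Z]; omega),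
      I.key_source p (by omega), I.key_source q (by omega)]
    exact Gap.key_eq_of_forall_le_lcpArr hsent hsa01 hpq (by omega) fun i hi hiq =>
      h2 i (by omega) (by omega)
end

section
/- The fundamental LF-step used in the H&M correctness proof: for sentinel-terminated strings, if sa0[i] ≠ n0 and the suffix starting at sa0[i]+1 has rank i' in sa0, then comparing length-h prefixes of suffixes at sa0[i] and sa1[j] (with sa1[j] ≠ n1, rank j' of sa1[j]+1) reduces to comparing their first characters and, in case of equality, comparing the length-(h−1) prefixes of the suffixes at ranks i' and j': t0[sa0[i], sa0[i]+h-1] ⪯ t1[sa1[j], sa1[j]+h-1] holds iff t0[sa0[i]] < t1[sa1[j]], or t0[sa0[i]] = t1[sa1[j]] and t0[sa0[i'], sa0[i']+h-2] ⪯ t1[sa1[j'], sa1[j']+h-2]. -/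
open List Finset

variable {A : Type*}

private lemma cons_le_cons_iff' [LinearOrder A] (a b : A) (l m : List A) :
    a :: l ≤ b :: m ↔ a < b ∨ (a = b ∧ l ≤ m) := by
  constructor
  · intro hle
    rcases lt_or_eq_of_le hle with hlt | heq
    · have hlex : List.Lex (· < ·) (a :: l) (b :: m) := hlt
      cases hlex with
      | cons h => exact Or.inr ⟨rfl, le_of_lt h⟩
      | rel h => exact Or.inl h
    · injection heq with h1 h2
      exact Or.inr ⟨h1, le_of_eq h2⟩
  · rintro (hlt | ⟨rfl, hle⟩)
    · exact le_of_lt (List.Lex.rel hlt)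
    · exact List.cons_le_cons a hle

/-- the fundamental LF-step of the H&M correctness proof:
comparing length-`h` prefixes of the suffixes at `sa0[i]` and `sa1[j]`
(neither being the last position) reduces to comparing first characters and,
on equality, the length-`(h-1)` prefixes of the suffixes at `sa0[i'] = sa0[i]+1`
and `sa1[j'] = sa1[j]+1`. -/
theorem lf_step [LinearOrder A] [Inhabited A]
    (t0 t1 : List A) (sa0 sa1 : ℕ → ℕ)
    (hsent : Sentinels t0 t1)
    (hsa0 : isSuffixArray t0 sa0) (hsa1 : isSuffixArray t1 sa1)
    (h i i' j j' : ℕ) (hh : 1 ≤ h)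
    (hi : i < t0.length) (hj : j < t1.length)
    (hi' : i' < t0.length) (hj' : j' < t1.length)
    (hne0 : sa0 i ≠ t0.length - 1) (hne1 : sa1 j ≠ t1.length - 1)
    (hstep0 : sa0 i' = sa0 i + 1) (hstep1 : sa1 j' = sa1 j + 1) :
    (t0.drop (sa0 i)).take h ≤ (t1.drop (sa1 j)).take h ↔
      (t0.getD (sa0 i) default < t1.getD (sa1 j) default ∨
        (t0.getD (sa0 i) default = t1.getD (sa1 j) default ∧
          (t0.drop (sa0 i')).take (h - 1) ≤ (t1.drop (sa1 j')).take (h - 1))) := by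
  have hm0 : sa0 i < t0.length := hsa0.1.1 hi
  have hm1 : sa1 j < t1.length := hsa1.1.1 hj
  obtain ⟨g, rfl⟩ : ∃ g, h = g + 1 := ⟨h - 1, (Nat.succ_pred_eq_of_pos hh).symm⟩
  rw [List.drop_eq_getElem_cons hm0, List.drop_eq_getElem_cons hm1,
    List.take_succ_cons, List.take_succ_cons, cons_le_cons_iff',
    List.getD_eq_getElem t0 default hm0, List.getD_eq_getElem t1 default hm1,
    hstep0, hstep1]
  simp
end
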